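/- Let n ≥ 1 and let k = (k_1, …, k_n) be a regular tuple of integers. If J ∈ GSp_{2n}(ℂ) satisfies J D_k(w) J^{−1} = D_k(w)^{−1} for every w ∈ ℂ× and J² = 1, then its symplectic multiplier is ν(J) = −1. Moreover such a J exists: the block matrix [[0, 1_n], [1_n, 0]] is one. -/

import Mathlib

open Matrix

noncomputable section

/-- 2n×2n matrices, indexed by `Fin n ⊕ Fin n`. -/
abbrev Mat (n : ℕ) (k : Type*) := Matrix (Fin n ⊕ Fin n) (Fin n ⊕ Fin n) k

/-- The standard symplectic form matrix `J_{2n} = [[0, 1], [-1, 0]]`. -/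
def Jmat (n : ℕ) : Mat n ℂ := fromBlocks 0 1 (-1) 0

/-- `A ∈ GSp_{2n}(ℂ)` with symplectic multiplier `ν`. -/
def inGSp (n : ℕ) (A : Mat n ℂ) (ν : ℂ) : Prop :=
  IsUnit A.det ∧ ν ≠ 0 ∧ Aᵀ * Jmat n * A = ν • Jmat n

/-- `D_k(w) = diag(w^{k_1}, …, w^{k_n}, w^{-k_1}, …, w^{-k_n})`. -/
def Dk {n : ℕ} (kk : Fin n → ℤ) (w : ℂ) : Mat n ℂ :=
  Matrix.diagonal (Sum.elim (fun i => w ^ kk i) (fun i => w ^ (-kk i)))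

/-- A tuple `(k_1, …, k_n)` of integers is regular if each `k_i` is nonzero and
`k_i ≠ ±k_j` for all `i ≠ j`. -/
def Regular {n : ℕ} (kk : Fin n → ℤ) : Prop :=
  (∀ i, kk i ≠ 0) ∧ ∀ i j, i ≠ j → kk i ≠ kk j ∧ kk i ≠ -kk j

/-!
Take `w = 2`. Since `J D_k(2) J⁻¹ = D_k(2)⁻¹ = D_{-k}(2)`, comparing entries shows that `J_{pq} ≠ 0`
forces the exponent of `D_k` at `q` to be minus the one at `p`; regularity says the exponents
`±k_i` are pairwise distinct, so `J` is supported on the anti-diagonal `q = swap p`. For such `J`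
the `(i, n + i)` entry of `Jᵀ J_{2n} J = ν J_{2n}` reads `ν = -J_{n+i,i} J_{i,n+i}`, and the
diagonal of `J² = 1` says that this product is `1`.
-/

namespace Matrix

variable {m R : Type*} [Fintype m]

theorem apply_eq_zero_of_mul_diagonal_eq_diagonal_mul [CommRing R] [NoZeroDivisors R]
    [DecidableEq m] {J : Matrix m m R} {d d' : m → R} (h : J * diagonal d = diagonal d' * J)
    {p q : m} (hpq : d q ≠ d' p) : J p q = 0 := by
  have hentry : J p q * d q = d' p * J p q := by
    simpa only [mul_diagonal, diagonal_mul] using congrFun (congrFun h p) q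
  have hprod : J p q * (d q - d' p) = 0 := by rw [mul_sub, hentry, mul_comm, sub_self]
  exact (mul_eq_zero.1 hprod).resolve_right (sub_ne_zero.2 hpq)

variable [NonUnitalNonAssocSemiring R] {J : Matrix m m R} {σ : m → m}

theorem mul_self_apply_self_of_support (hJ : ∀ p q, q ≠ σ p → J p q = 0) (p : m) :
    (J * J) p p = J p (σ p) * J (σ p) p := by
  rw [mul_apply, Finset.sum_eq_single (σ p) (fun q _ hq => by rw [hJ p q hq, zero_mul])
    (fun h => absurd (Finset.mem_univ _) h)]

theorem transpose_mul_mul_apply_of_support (hσ : Function.Involutive σ)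
    (hJ : ∀ p q, q ≠ σ p → J p q = 0) (M : Matrix m m R) (p q : m) :
    (Jᵀ * M * J) p q = J (σ p) p * M (σ p) (σ q) * J (σ q) q := by
  have hJ' : ∀ r s, r ≠ σ s → J r s = 0 := fun r s hrs =>
    hJ r s fun h => hrs (by rw [h, hσ])
  rw [mul_apply, Finset.sum_eq_single (σ q)
    (fun s _ hs => by rw [hJ' s q hs, mul_zero]) (fun h => absurd (Finset.mem_univ _) h),
    mul_apply, Finset.sum_eq_single (σ p)
    (fun r _ hr => by rw [transpose_apply, hJ' r p hr, zero_mul])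
    (fun h => absurd (Finset.mem_univ _) h), transpose_apply]

end Matrix

section SwapBlocks

variable {m R : Type*} [Fintype m] [DecidableEq m] [Ring R]

theorem fromBlocks_zero_one_one_zero_mul_self :
    (fromBlocks 0 1 1 0 : Matrix (m ⊕ m) (m ⊕ m) R) * fromBlocks 0 1 1 0 = 1 := by
  simp [fromBlocks_multiply, ← fromBlocks_one]

theorem fromBlocks_zero_one_one_zero_conj (A B : Matrix m m R) :
    (fromBlocks 0 1 1 0 : Matrix (m ⊕ m) (m ⊕ m) R) * fromBlocks A 0 0 B * fromBlocks 0 1 1 0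
      = fromBlocks B 0 0 A := by
  simp [fromBlocks_multiply]

end SwapBlocks

theorem transpose_fromBlocks_zero_one_one_zero_mul_Jmat_mul (n : ℕ) :
    (fromBlocks 0 1 1 0 : Mat n ℂ)ᵀ * Jmat n * fromBlocks 0 1 1 0 = (-1 : ℂ) • Jmat n := by
  simp [Jmat, fromBlocks_transpose, fromBlocks_multiply, fromBlocks_neg]

section Dk

variable {n : ℕ} (kk : Fin n → ℤ)

theorem Dk_eq_diagonal_zpow (w : ℂ) : Dk kk w = diagonal fun p => w ^ Sum.elim kk (-kk) p := by
  rw [Dk]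
  congr 1
  funext p
  cases p <;> rfl

theorem Dk_inv {w : ℂ} (hw : w ≠ 0) : (Dk kk w)⁻¹ = Dk (-kk) w := by
  refine inv_eq_right_inv ?_
  rw [Dk, Dk, diagonal_mul_diagonal, ← diagonal_one]
  congr 1
  funext p
  cases p <;> simp [zpow_ne_zero _ hw]

theorem fromBlocks_zero_one_one_zero_conj_Dk (w : ℂ) :
    (fromBlocks 0 1 1 0 : Mat n ℂ) * Dk kk w * fromBlocks 0 1 1 0 = Dk (-kk) w := by
  simp only [Dk, ← fromBlocks_diagonal, fromBlocks_zero_one_one_zero_conj, Pi.neg_apply, neg_neg]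

end Dk

theorem two_zpow_injective : Function.Injective fun z : ℤ => (2 : ℂ) ^ z := by
  intro a b h
  have hnorm := congrArg norm h
  simp only [norm_zpow, Complex.norm_two] at hnorm
  exact zpow_right_injective₀ two_pos (by norm_num) hnorm

namespace Regular

variable {n : ℕ} {kk : Fin n → ℤ}

theorem injective_sumElim_neg (hreg : Regular kk) : Function.Injective (Sum.elim kk (-kk)) := by
  obtain ⟨hk0, hkij⟩ := hreg
  rintro (i | i) (j | j) h <;> simp only [Sum.elim_inl, Sum.elim_inr, Pi.neg_apply] at h <;>
    obtain rfl | hij := eq_or_ne i j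
  · rfl
  · exact absurd h (hkij i j hij).1
  · exact absurd (by omega) (hk0 i)
  · exact absurd h (hkij i j hij).2
  · exact absurd (by omega) (hk0 i)
  · exact absurd (by omega) (hkij i j hij).2
  · rfl
  · exact absurd (by omega) (hkij i j hij).1

theorem apply_eq_zero_of_mul_Dk_eq (hreg : Regular kk) {J : Mat n ℂ}
    (h : J * Dk kk 2 = Dk (-kk) 2 * J) {p q : Fin n ⊕ Fin n} (hpq : q ≠ Sum.swap p) :
    J p q = 0 := by
  rw [Dk_eq_diagonal_zpow, Dk_eq_diagonal_zpow] at h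
  refine apply_eq_zero_of_mul_diagonal_eq_diagonal_mul h fun hq => hpq ?_
  have hneg : Sum.elim (-kk) (-(-kk)) p = Sum.elim kk (-kk) (Sum.swap p) := by
    cases p <;> simp
  exact hreg.injective_sumElim_neg (two_zpow_injective (hq.trans (congrArg _ hneg)))

end Regular

theorem multiplier_eq_neg_one_of_support_swap {n : ℕ} (hn : 1 ≤ n) {J : Mat n ℂ} {ν : ℂ}
    (hGSp : Jᵀ * Jmat n * J = ν • Jmat n) (hJJ : J * J = 1)
    (hJ : ∀ p q, q ≠ Sum.swap p → J p q = 0) : ν = -1 := by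
  let i : Fin n := ⟨0, hn⟩
  have hentry := congrFun (congrFun hGSp (Sum.inl i)) (Sum.inr i)
  have hdiag := congrFun (congrFun hJJ (Sum.inr i)) (Sum.inr i)
  rw [transpose_mul_mul_apply_of_support Sum.swap_swap hJ] at hentry
  rw [mul_self_apply_self_of_support hJ] at hdiag
  simp only [Sum.swap_inl, Sum.swap_inr, Jmat, fromBlocks_apply₂₁, fromBlocks_apply₁₂, Matrix.neg_apply,
    one_apply_eq, Matrix.smul_apply, smul_eq_mul, mul_one] at hentry hdiag
  linear_combination -hentry - hdiag

/-- Any `J ∈ GSp_{2n}(ℂ)` with `J D_k(w) J⁻¹ = D_k(w)⁻¹` for all `w ∈ ℂ×` and `J² = 1`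
has symplectic multiplier `-1`; moreover `[[0, 1], [1, 0]]` is such a `J`. -/
theorem gsp_involution_multiplier (n : ℕ) (hn : 1 ≤ n) (kk : Fin n → ℤ)
    (hreg : Regular kk) :
    (∀ (J : Mat n ℂ) (ν : ℂ), inGSp n J ν →
        (∀ w : ℂ, w ≠ 0 → J * Dk kk w * J⁻¹ = (Dk kk w)⁻¹) → J * J = 1 → ν = -1) ∧
    (inGSp n (fromBlocks 0 1 1 0) (-1) ∧
      (∀ w : ℂ, w ≠ 0 →
        (fromBlocks 0 1 1 0 : Mat n ℂ) * Dk kk w * (fromBlocks 0 1 1 0 : Mat n ℂ)⁻¹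
          = (Dk kk w)⁻¹) ∧
      (fromBlocks 0 1 1 0 : Mat n ℂ) * fromBlocks 0 1 1 0 = 1) := by
  have hSS := fromBlocks_zero_one_one_zero_mul_self (m := Fin n) (R := ℂ)
  refine ⟨fun J ν hJ hconj hJJ => ?_,
    ⟨isUnit_det_of_right_inverse hSS, by norm_num,
      transpose_fromBlocks_zero_one_one_zero_mul_Jmat_mul n⟩, fun w hw => ?_, hSS⟩
  · have hcomm : J * Dk kk 2 = Dk (-kk) 2 * J := by
      rw [← Dk_inv kk two_ne_zero, ← hconj 2 two_ne_zero, nonsing_inv_mul_cancel_right _ _ hJ.1]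
    exact multiplier_eq_neg_one_of_support_swap hn hJ.2.2 hJJ
      fun p q => hreg.apply_eq_zero_of_mul_Dk_eq hcomm
  · rw [inv_eq_right_inv hSS, fromBlocks_zero_one_one_zero_conj_Dk, Dk_inv kk hw]
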